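/- Under the same hypotheses (Q m × n with orthonormal columns, B symmetric n × n, X = QQᵀX + UR with UᵀU = I, QᵀU = 0), the subtraction case holds: Q B Qᵀ - X Xᵀ = Q_c B_c Q_cᵀ with Q_c = [Q U] and B_c = [[B - (QᵀX)(QᵀX)ᵀ, -(QᵀX)Rᵀ], [-R(QᵀX)ᵀ, -RRᵀ]]. -/

import Mathlib

open Matrix

namespace Matrix

variable {α l m n k : Type*} [Fintype l] [Fintype n] [Fintype k]

theorem fromCols_mul_fromBlocks_mul_transpose_fromCols [Semiring α] (P : Matrix m n α) (U : Matrix m k α)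
    (A : Matrix n n α) (B : Matrix n k α) (C : Matrix k n α) (D : Matrix k k α) :
    fromCols P U * fromBlocks A B C D * (fromCols P U)ᵀ =
      P * A * Pᵀ + P * B * Uᵀ + U * C * Pᵀ + U * D * Uᵀ := by
  rw [transpose_fromCols, fromCols_mul_fromBlocks, fromCols_mul_fromRows]
  simp only [Matrix.add_mul]
  abel

theorem mul_add_mul_mul_transpose_self [CommSemiring α] (P : Matrix m n α) (U : Matrix m k α)
    (Y : Matrix n l α) (R : Matrix k l α) :
    (P * Y + U * R) * (P * Y + U * R)ᵀ =
      P * (Y * Yᵀ) * Pᵀ + P * (Y * Rᵀ) * Uᵀ + U * (R * Yᵀ) * Pᵀ + U * (R * Rᵀ) * Uᵀ := by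
  simp only [transpose_add, transpose_mul, Matrix.add_mul, Matrix.mul_add, Matrix.mul_assoc]
  abel

theorem sub_mul_transpose_self_eq_fromCols_mul_fromBlocks [CommRing α] {P : Matrix m n α}
    {U : Matrix m k α} (A : Matrix n n α) {X : Matrix m l α} {Y : Matrix n l α}
    {R : Matrix k l α} (hX : X = P * Y + U * R) :
    P * A * Pᵀ - X * Xᵀ =
      fromCols P U * fromBlocks (A - Y * Yᵀ) (-(Y * Rᵀ)) (-(R * Yᵀ)) (-(R * Rᵀ)) *
        (fromCols P U)ᵀ := by
  rw [fromCols_mul_fromBlocks_mul_transpose_fromCols, hX, mul_add_mul_mul_transpose_self]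
  simp only [Matrix.mul_sub, Matrix.sub_mul, Matrix.mul_neg, Matrix.neg_mul]
  abel

end Matrix

theorem stmt_3_general (m n k : ℕ)
    (Q : Matrix (Fin m) (Fin n) ℝ)
    (B : Matrix (Fin n) (Fin n) ℝ)
    (X : Matrix (Fin m) (Fin k) ℝ)
    (U : Matrix (Fin m) (Fin k) ℝ)
    (R : Matrix (Fin k) (Fin k) ℝ) (hX : X = Q * (Qᵀ * X) + U * R) :
    Q * B * Qᵀ - X * Xᵀ =
      Matrix.fromCols Q U *
        Matrix.fromBlocks (B - (Qᵀ * X) * (Qᵀ * X)ᵀ) (-((Qᵀ * X) * Rᵀ))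
          (-(R * (Qᵀ * X)ᵀ)) (-(R * Rᵀ)) *
        (Matrix.fromCols Q U)ᵀ :=
  sub_mul_transpose_self_eq_fromCols_mul_fromBlocks B hX

theorem stmt_3 (m n k : ℕ)
    (Q : Matrix (Fin m) (Fin n) ℝ) (hQ : Qᵀ * Q = 1)
    (B : Matrix (Fin n) (Fin n) ℝ) (hB : Bᵀ = B)
    (X : Matrix (Fin m) (Fin k) ℝ)
    (U : Matrix (Fin m) (Fin k) ℝ) (hU : Uᵀ * U = 1) (hQU : Qᵀ * U = 0)
    (R : Matrix (Fin k) (Fin k) ℝ) (hX : X = Q * (Qᵀ * X) + U * R) :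
    Q * B * Qᵀ - X * Xᵀ =
      Matrix.fromCols Q U *
        Matrix.fromBlocks (B - (Qᵀ * X) * (Qᵀ * X)ᵀ) (-((Qᵀ * X) * Rᵀ))
          (-(R * (Qᵀ * X)ᵀ)) (-(R * Rᵀ)) *
        (Matrix.fromCols Q U)ᵀ :=
  stmt_3_general m n k Q B X U R hX
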